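/- The group with presentation ⟨Z_1, Z_2, …, Z_6 | Z_1 = Z_6 Z_2, Z_2 = Z_1 Z_3, Z_3 = Z_2 Z_4, Z_4 = Z_3 Z_5, Z_5 = Z_4 Z_6, Z_6 = Z_5 Z_1⟩ (i.e. Z_j = Z_{j−1} Z_{j+1} with indices taken mod 6) is isomorphic to the integer Heisenberg group H of upper unitriangular 3×3 matrices with integer entries. Consequently, the fundamental group of the 6-fold cyclic cover M_6 of S^3 branched along the trefoil knot, which admits this presentation, is isomorphic to H. -/

import Mathlib

/-- The integer Heisenberg group: upper unitriangular 3×3 integer matrices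
`!![1, a, c; 0, 1, b; 0, 0, 1]`, written in the coordinates `(a, b, c)`. -/
@[ext]
structure Heisenberg : Type where
  a : ℤ
  b : ℤ
  c : ℤ

namespace Heisenberg

instance : Mul Heisenberg :=
  ⟨fun x y => ⟨x.a + y.a, x.b + y.b, x.c + y.c + x.a * y.b⟩⟩
instance : One Heisenberg := ⟨⟨0, 0, 0⟩⟩
instance : Inv Heisenberg := ⟨fun x => ⟨-x.a, -x.b, -x.c + x.a * x.b⟩⟩

@[simp] theorem mul_a (x y : Heisenberg) : (x * y).a = x.a + y.a := rfl
@[simp] theorem mul_b (x y : Heisenberg) : (x * y).b = x.b + y.b := rfl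
@[simp] theorem mul_c (x y : Heisenberg) : (x * y).c = x.c + y.c + x.a * y.b := rfl
@[simp] theorem one_a : (1 : Heisenberg).a = 0 := rfl
@[simp] theorem one_b : (1 : Heisenberg).b = 0 := rfl
@[simp] theorem one_c : (1 : Heisenberg).c = 0 := rfl
@[simp] theorem inv_a (x : Heisenberg) : x⁻¹.a = -x.a := rfl
@[simp] theorem inv_b (x : Heisenberg) : x⁻¹.b = -x.b := rfl
@[simp] theorem inv_c (x : Heisenberg) : x⁻¹.c = -x.c + x.a * x.b := rfl

instance : Group Heisenberg where
  mul_assoc x y z := by ext <;> simp <;> ring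
  one_mul x := by ext <;> simp
  mul_one x := by ext <;> simp
  inv_mul_cancel x := by ext <;> simp

/-- The unitriangular matrix corresponding to an element of the Heisenberg
group. -/
def toMatrix (x : Heisenberg) : Matrix (Fin 3) (Fin 3) ℤ :=
  !![1, x.a, x.c; 0, 1, x.b; 0, 0, 1]

theorem toMatrix_mul (x y : Heisenberg) :
    toMatrix (x * y) = toMatrix x * toMatrix y := by
  simp only [toMatrix, Matrix.mul_fin_three, mul_a, mul_b, mul_c]
  ring_nf

end Heisenberg

/-- The relations `Z_j = Z_{j-1} Z_{j+1}` (indices mod 6), written as the words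
`Z_{j-1} Z_{j+1} Z_j⁻¹` in the free group on the six generators
`Z_0, …, Z_5`. -/
def trefoilRels : Set (FreeGroup (Fin 6)) :=
  Set.range fun j : Fin 6 =>
    FreeGroup.of (j - 1) * FreeGroup.of (j + 1) * (FreeGroup.of j)⁻¹

/-!
Put A = Z₀ and B = Z₂. Read as Z_{j+1} = Z_{j-1}⁻¹ Z_j, four of the relations express
Z₁, Z₃, Z₄, Z₅ as words in A and B. The other two say ⁅A, B⁻¹⁆ = ⁅B, A⁆ and
⁅B⁻¹, A⁻¹⁆ = ⁅A, B⁻¹⁆, that is, ⁅B, A⁆ is fixed by conjugation by B and by AB, so ⁅A, B⁆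
commutes with A and B.

H is generated by X = (1,0,0) and Y = (0,1,0), with normal form (a,b,c) = ⁅X,Y⁆^c Y^b X^a.
Whenever ⁅x, y⁆ commutes with x and y one has x^a y^b = ⁅x,y⁆^(ab) y^b x^a, which is exactly
the multiplication law of H, so X ↦ x, Y ↦ y extends to a homomorphism. With x = A, y = B this
is inverse to the map sending Z₀ ↦ X, Z₂ ↦ Y: both composites fix generators.
-/

open scoped commutatorElement

section

variable {G : Type*} [Group G] {x y : G}

theorem pow_mul_eq_commutatorElement_pow_mul_mul_pow (hx : Commute ⁅x, y⁆ x) (n : ℕ) :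
    x ^ n * y = ⁅x, y⁆ ^ n * y * x ^ n := by
  induction n with
  | zero => simp
  | succ n ih =>
    calc x ^ (n + 1) * y = x ^ n * ⁅x, y⁆ * y * x := by
          rw [pow_succ, commutatorElement_def]; group
      _ = ⁅x, y⁆ ^ (n + 1) * y * x ^ (n + 1) := by
          rw [← (hx.pow_right n).eq, mul_assoc _ _ y, ih]; group

theorem commutatorElement_inv_left_of_commute (hx : Commute ⁅x, y⁆ x) :
    ⁅x⁻¹, y⁆ = ⁅x, y⁆⁻¹ := by
  rw [commutatorElement_inv_left, ← commutatorElement_inv, mul_assoc, hx.inv_left.eq,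
    inv_mul_cancel_left]

theorem zpow_mul_eq_commutatorElement_zpow_mul_mul_zpow (hx : Commute ⁅x, y⁆ x) (a : ℤ) :
    x ^ a * y = ⁅x, y⁆ ^ a * y * x ^ a := by
  obtain ⟨n, rfl | rfl⟩ := Int.eq_nat_or_neg a
  · simpa using pow_mul_eq_commutatorElement_pow_mul_mul_pow hx n
  · have hx' : Commute ⁅x⁻¹, y⁆ x⁻¹ := by
      rw [commutatorElement_inv_left_of_commute hx]; exact hx.inv_inv
    simpa [commutatorElement_inv_left_of_commute hx, -commutatorElement_inv] using
      pow_mul_eq_commutatorElement_pow_mul_mul_pow hx' n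

theorem zpow_mul_zpow_eq_commutatorElement_zpow_mul_mul_zpow (hx : Commute ⁅x, y⁆ x)
    (hy : Commute ⁅x, y⁆ y) (a b : ℤ) :
    x ^ a * y ^ b = ⁅x, y⁆ ^ (a * b) * y ^ b * x ^ a := by
  have h : SemiconjBy (x ^ a) y (⁅x, y⁆ ^ a * y) := by
    rw [SemiconjBy, zpow_mul_eq_commutatorElement_zpow_mul_mul_zpow hx]
  rw [(h.zpow_right b).eq, (hy.zpow_left a).mul_zpow b, zpow_mul]

theorem commute_of_inv_mul_mul_eq {g a : G} (h : g⁻¹ * a * g = a) : Commute a g :=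
  calc a * g = g * (g⁻¹ * a * g) := by group
    _ = g * a := by rw [h]

end

namespace Heisenberg

def X : Heisenberg := ⟨1, 0, 0⟩

def Y : Heisenberg := ⟨0, 1, 0⟩

theorem commutatorElement_X_Y : ⁅X, Y⁆ = ⟨0, 0, 1⟩ := rfl

theorem mk_zpow_of_mul_eq_zero {a b : ℤ} (c : ℤ) (hab : a * b = 0) (n : ℤ) :
    (⟨a, b, c⟩ : Heisenberg) ^ n = ⟨n * a, n * b, n * c⟩ := by
  induction n using Int.induction_on with
  | zero => ext <;> simp
  | succ n ih =>
    rw [zpow_add_one, ih]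
    ext <;> simp only [mul_a, mul_b, mul_c]
    · ring
    · ring
    · linear_combination (n : ℤ) * hab
  | pred n ih =>
    rw [zpow_sub_one, ih]
    ext <;> simp only [mul_a, mul_b, mul_c, inv_a, inv_b, inv_c]
    · ring
    · ring
    · linear_combination (1 + n : ℤ) * hab

theorem eq_commutatorElement_zpow_mul_zpow_mul_zpow (g : Heisenberg) :
    g = ⁅X, Y⁆ ^ g.c * Y ^ g.b * X ^ g.a := by
  rw [commutatorElement_X_Y, X, Y, mk_zpow_of_mul_eq_zero _ (zero_mul 0),
    mk_zpow_of_mul_eq_zero _ (zero_mul 1), mk_zpow_of_mul_eq_zero _ (mul_zero 1)]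
  ext <;> simp

variable {G : Type*} [Group G]

theorem hom_ext {f g : Heisenberg →* G} (hX : f X = g X) (hY : f Y = g Y) : f = g := by
  refine MonoidHom.ext fun p => ?_
  rw [eq_commutatorElement_zpow_mul_zpow_mul_zpow p]
  simp only [map_mul, map_zpow, map_commutatorElement, hX, hY]

def lift (x y : G) (hx : Commute ⁅x, y⁆ x) (hy : Commute ⁅x, y⁆ y) : Heisenberg →* G where
  toFun g := ⁅x, y⁆ ^ g.c * y ^ g.b * x ^ g.a
  map_one' := by simp
  map_mul' g h := by
    have hzx := hx.zpow_zpow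
    have hzy := hy.zpow_zpow
    simp only [mul_a, mul_b, mul_c]
    symm
    calc ⁅x, y⁆ ^ g.c * y ^ g.b * x ^ g.a * (⁅x, y⁆ ^ h.c * y ^ h.b * x ^ h.a)
        = ⁅x, y⁆ ^ g.c * (y ^ g.b * (x ^ g.a * ⁅x, y⁆ ^ h.c)) * y ^ h.b * x ^ h.a := by group
      _ = ⁅x, y⁆ ^ g.c * (⁅x, y⁆ ^ h.c * y ^ g.b) * (x ^ g.a * y ^ h.b) * x ^ h.a := by
          rw [← (hzx h.c g.a).eq, (hzy h.c g.b).eq]; group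
      _ = ⁅x, y⁆ ^ g.c * ⁅x, y⁆ ^ h.c * (y ^ g.b * ⁅x, y⁆ ^ (g.a * h.b)) * y ^ h.b *
            (x ^ g.a * x ^ h.a) := by
          rw [zpow_mul_zpow_eq_commutatorElement_zpow_mul_mul_zpow hx hy]; group
      _ = ⁅x, y⁆ ^ (g.c + h.c + g.a * h.b) * y ^ (g.b + h.b) * x ^ (g.a + h.a) := by
          rw [← (hzy _ g.b).eq]; group

@[simp] theorem lift_X {x y : G} (hx : Commute ⁅x, y⁆ x) (hy : Commute ⁅x, y⁆ y) :
    lift x y hx hy X = x := by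
  simp [lift, X]

@[simp] theorem lift_Y {x y : G} (hx : Commute ⁅x, y⁆ x) (hy : Commute ⁅x, y⁆ y) :
    lift x y hx hy Y = y := by
  simp [lift, Y]

end Heisenberg

namespace Trefoil

local notation "Z" => @PresentedGroup.of (Fin 6) trefoilRels
local notation "A" => Z 0
local notation "B" => Z 2

theorem of_sub_one_mul_of_add_one (j : Fin 6) : Z (j - 1) * Z (j + 1) = Z j := by
  simpa [PresentedGroup.of, mul_inv_eq_one] using
    PresentedGroup.one_of_mem (rels := trefoilRels) ⟨j, rfl⟩

theorem of_one : Z 1 = A * B := (of_sub_one_mul_of_add_one 1).symm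

theorem of_three : Z 3 = B⁻¹ * A⁻¹ * B := by
  have h : Z 1 * Z 3 = B := of_sub_one_mul_of_add_one 2
  rw [eq_inv_mul_of_mul_eq h, of_one]; group

theorem of_four : Z 4 = B⁻¹ * B⁻¹ * A⁻¹ * B := by
  have h : B * Z 4 = Z 3 := of_sub_one_mul_of_add_one 3
  rw [eq_inv_mul_of_mul_eq h, of_three]; group

theorem of_five : Z 5 = B⁻¹ * A * B⁻¹ * A⁻¹ * B := by
  have h : Z 3 * Z 5 = Z 4 := of_sub_one_mul_of_add_one 4
  rw [eq_inv_mul_of_mul_eq h, of_three, of_four]; group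

theorem hom_ext {G : Type*} [Group G] {f g : PresentedGroup trefoilRels →* G}
    (h₀ : f A = g A) (h₂ : f B = g B) : f = g := by
  refine PresentedGroup.ext fun j => ?_
  fin_cases j <;> simp [of_one, of_three, of_four, of_five, h₀, h₂]

theorem commutatorElement_A_inv_B : ⁅A, B⁻¹⁆ = ⁅B, A⁆ := by
  have h : Z 5 * Z 1 = A := of_sub_one_mul_of_add_one 0
  rw [of_five, of_one] at h
  calc ⁅A, B⁻¹⁆ = B * (B⁻¹ * A * B⁻¹ * A⁻¹ * B * (A * B)) * B⁻¹ * A⁻¹ := by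
        rw [commutatorElement_def]; group
    _ = ⁅B, A⁆ := by rw [h, commutatorElement_def]

theorem commutatorElement_inv_B_inv_A : ⁅B⁻¹, A⁻¹⁆ = ⁅A, B⁻¹⁆ := by
  have h : Z 4 * A = Z 5 := of_sub_one_mul_of_add_one 5
  rw [of_four, of_five] at h
  calc ⁅B⁻¹, A⁻¹⁆ = B * (B⁻¹ * B⁻¹ * A⁻¹ * B * A) := by rw [commutatorElement_def]; group
    _ = ⁅A, B⁻¹⁆ := by rw [h, commutatorElement_def]; group

theorem commute_commutatorElement_B : Commute ⁅A, B⁆ B := by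
  rw [← commutatorElement_inv, Commute.inv_left_iff]
  exact commute_of_inv_mul_mul_eq <| by
    rw [← commutatorElement_inv_right, commutatorElement_A_inv_B]

theorem commute_commutatorElement_A : Commute ⁅A, B⁆ A := by
  have hB := commute_commutatorElement_B
  rw [← commutatorElement_inv, Commute.inv_left_iff] at hB ⊢
  have hAB : Commute ⁅B, A⁆ (A * B) := commute_of_inv_mul_mul_eq <|
    calc (A * B)⁻¹ * ⁅B, A⁆ * (A * B) = ⁅B⁻¹, A⁻¹⁆ := by
          rw [commutatorElement_def, commutatorElement_def]; group
      _ = ⁅B, A⁆ := by rw [commutatorElement_inv_B_inv_A, commutatorElement_A_inv_B]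
  simpa using hAB.mul_right hB.inv_right

-- Z₀ ↦ X and Z₂ ↦ Y; the other images are forced by the relations.
def toHeisenberg : PresentedGroup trefoilRels →* Heisenberg :=
  PresentedGroup.toGroup (f := ![⟨1, 0, 0⟩, ⟨1, 1, 1⟩, ⟨0, 1, 0⟩, ⟨-1, 0, -1⟩, ⟨-1, -1, -1⟩,
    ⟨0, -1, -1⟩]) <| by
  rintro _ ⟨j, rfl⟩
  fin_cases j <;> rfl

theorem toHeisenberg_A : toHeisenberg A = Heisenberg.X := PresentedGroup.toGroup.of _

theorem toHeisenberg_B : toHeisenberg B = Heisenberg.Y := PresentedGroup.toGroup.of _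

def ofHeisenberg : Heisenberg →* PresentedGroup trefoilRels :=
  Heisenberg.lift A B commute_commutatorElement_A commute_commutatorElement_B

def equivHeisenberg : PresentedGroup trefoilRels ≃* Heisenberg :=
  toHeisenberg.toMulEquiv ofHeisenberg
    (hom_ext (by simp [ofHeisenberg, toHeisenberg_A]) (by simp [ofHeisenberg, toHeisenberg_B]))
    (Heisenberg.hom_ext (by simp [ofHeisenberg, toHeisenberg_A])
      (by simp [ofHeisenberg, toHeisenberg_B]))

end Trefoil

theorem stmt_17
    -- the 6-fold cyclic cover M₆ of S³ branched along the trefoil knot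
    (M6 : Type) [TopologicalSpace M6] (x : M6)
    -- π₁(M₆) admits the presentation ⟨Z₁,…,Z₆ | Z_j = Z_{j−1} Z_{j+1}⟩
    (hpres : Nonempty (FundamentalGroup M6 x ≃* PresentedGroup trefoilRels)) :
    Nonempty (PresentedGroup trefoilRels ≃* Heisenberg) ∧
    Nonempty (FundamentalGroup M6 x ≃* Heisenberg) := by
  obtain ⟨e⟩ := hpres
  exact ⟨⟨Trefoil.equivHeisenberg⟩, ⟨e.trans Trefoil.equivHeisenberg⟩⟩
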